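/- Let 0 < δ < 1 and let n be a positive integer with (1−δ)·n(n−1)/2 ≤ n/2. Then f⁺(n,δ) = 2^{⌊(1−δ)·n(n−1)/2⌋}; that is, every partial order Q on n points with comp(Q) ≥ δ·n(n−1)/2 satisfies e(Q) ≤ 2^{⌊(1−δ)·n(n−1)/2⌋}, and some such partial order attains this value. -/
import Mathlib


/-- The number of linear extensions of a partial order `P` on `n` points:
bijections to `{1, ..., n}` (modeled as `Fin n` with its usual order) that
are strictly monotone with respect to `P`. -/
noncomputable def linExtCount (n : ℕ) (P : PartialOrder (Fin n)) : ℕ :=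
  Nat.card {f : Fin n ≃ Fin n // ∀ x y : Fin n, P.lt x y → f x < f y}

/-- The number of comparable pairs of `P`: each unordered comparable pair
`{x, y}` corresponds to exactly one ordered pair `(x, y)` with `x ≺ y`. -/
noncomputable def compCount (n : ℕ) (P : PartialOrder (Fin n)) : ℕ :=
  Nat.card {p : Fin n × Fin n // P.lt p.1 p.2}

/-- `f⁺(n, δ)`: the maximum number of linear extensions over partial orders on
`n` points with at least `δ·n(n-1)/2` comparable pairs. -/
noncomputable def fPlus (n : ℕ) (δ : ℝ) : ℕ :=
  sSup {m : ℕ | ∃ P : PartialOrder (Fin n),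
    δ * ((n : ℝ) * ((n : ℝ) - 1) / 2) ≤ (compCount n P : ℝ) ∧ linExtCount n P = m}

lemma equiv_eq_of_rel (n : ℕ) (f f' : Fin n ≃ Fin n)
    (h : ∀ x y : Fin n, x ≠ y → f x < f y → f' x < f' y) : f' = f := by
  have hg : StrictMono (fun a => f' (f.symm a)) := by
    intro a b hab
    have hne : f.symm a ≠ f.symm b := fun e => absurd (f.symm.injective e) (ne_of_lt hab)
    exact h _ _ hne (by simpa using hab)
  have hr : Set.range (fun a => f' (f.symm a)) = Set.range (id : Fin n → Fin n) := by
    rw [Set.range_id]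
    exact Set.range_eq_univ.mpr fun b => ⟨f (f'.symm b), by simp⟩
  have inst : WellFoundedLT (Fin n) := inferInstance
  have heq : (fun a => f' (f.symm a)) = (id : Fin n → Fin n) :=
    (@StrictMono.range_inj (Fin n) (Fin n) _ _ inst _ _ hg strictMono_id).mp hr
  ext x
  have := congrFun heq (f x)
  simp only [Equiv.symm_apply_apply, id] at this
  exact congrArg Fin.val this

lemma linExt_le_pow (n : ℕ) (P : PartialOrder (Fin n)) :
    linExtCount n P ≤
      2 ^ Nat.card {p : Fin n × Fin n // p.1 < p.2 ∧ ¬P.lt p.1 p.2 ∧ ¬P.lt p.2 p.1} := by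
  classical
  have key : linExtCount n P ≤
      Nat.card ({p : Fin n × Fin n // p.1 < p.2 ∧ ¬P.lt p.1 p.2 ∧ ¬P.lt p.2 p.1} → Bool) := by
    apply Nat.card_le_card_of_injective
      (fun f p => decide (f.1 p.1.1 < f.1 p.1.2))
    intro f f' hff
    apply Subtype.ext
    apply equiv_eq_of_rel n f'.1 f.1
    intro x y hxy hlt
    by_cases hc : P.lt x y
    · exact f.2 x y hc
    by_cases hc' : P.lt y x
    · exact absurd (f'.2 y x hc') (asymm hlt)
    rcases lt_trichotomy x y with hxy' | rfl | hyx'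
    · have := congrFun hff ⟨(x, y), hxy', hc, hc'⟩
      simp only [decide_eq_decide] at this
      exact this.mpr hlt
    · exact absurd rfl hxy
    · have := congrFun hff ⟨(y, x), hyx', hc', hc⟩
      simp only [decide_eq_decide] at this
      have h1 : ¬ (f'.1 y < f'.1 x) := asymm hlt
      have h2 : ¬ (f.1 y < f.1 x) := fun hh => h1 (this.mp hh)
      have hne : (f.1 x).1 ≠ (f.1 y).1 := fun e => hxy (f.1.injective (Fin.val_injective e))
      rw [Fin.lt_def] at h2 ⊢
      clear hc hc' hlt h1 this hff
      omega
  calc linExtCount n P ≤ _ := key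
    _ = 2 ^ _ := by rw [Nat.card_fun]; simp

lemma count_eq (n : ℕ) (P : PartialOrder (Fin n)) :
    2 * compCount n P
      + 2 * Nat.card {p : Fin n × Fin n // p.1 < p.2 ∧ ¬P.lt p.1 p.2 ∧ ¬P.lt p.2 p.1}
      + n = n * n := by
  classical
  rw [compCount, Nat.card_eq_fintype_card, Nat.card_eq_fintype_card,
    Fintype.card_subtype, Fintype.card_subtype]
  have hirr : ∀ a : Fin n, ¬ P.lt a a := fun a => @lt_irrefl _ P.toPreorder a
  have hasym : ∀ a b : Fin n, P.lt a b → ¬ P.lt b a :=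
    fun a b h => @lt_asymm _ P.toPreorder a b h
  have hne : ∀ a b : Fin n, P.lt a b → a ≠ b := by
    intro a b h e; subst e; exact hirr a h
  have h0 : (Finset.univ.filter fun p : Fin n × Fin n => p.1 = p.2).card
      + (Finset.univ.filter fun p : Fin n × Fin n => ¬ p.1 = p.2).card = n * n := by
    rw [Finset.card_filter_add_card_filter_not]
    simp
  have hE : (Finset.univ.filter fun p : Fin n × Fin n => p.1 = p.2).card = n := by
    rw [show (Finset.univ.filter fun p : Fin n × Fin n => p.1 = p.2)
        = Finset.univ.image (fun x : Fin n => (x, x)) by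
      ext p
      simp only [Finset.mem_filter, Finset.mem_univ, true_and, Finset.mem_image]
      constructor
      · intro h; exact ⟨p.1, Prod.ext rfl h⟩
      · rintro ⟨x, rfl⟩; rfl]
    rw [Finset.card_image_of_injective _ (fun a b h => congrArg Prod.fst h)]
    simp
  have h1 : (Finset.univ.filter fun p : Fin n × Fin n => ¬ p.1 = p.2).card
      = (Finset.univ.filter fun p : Fin n × Fin n => P.lt p.1 p.2).card
      + (Finset.univ.filter fun p : Fin n × Fin n => ¬ p.1 = p.2 ∧ ¬ P.lt p.1 p.2).card := by
    rw [← Finset.card_filter_add_card_filter_not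
      (s := Finset.univ.filter fun p : Fin n × Fin n => ¬ p.1 = p.2)
      (p := fun p => P.lt p.1 p.2), Finset.filter_filter, Finset.filter_filter]
    congr 2
    ext p
    simp only [Finset.mem_filter, Finset.mem_univ, true_and]
    exact ⟨fun h => h.2, fun h => ⟨hne _ _ h, h⟩⟩
  have h2 : (Finset.univ.filter fun p : Fin n × Fin n => ¬ p.1 = p.2 ∧ ¬ P.lt p.1 p.2).card
      = (Finset.univ.filter fun p : Fin n × Fin n => P.lt p.2 p.1).card
      + (Finset.univ.filter fun p : Fin n × Fin n =>
          ¬ p.1 = p.2 ∧ ¬ P.lt p.1 p.2 ∧ ¬ P.lt p.2 p.1).card := by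
    rw [← Finset.card_filter_add_card_filter_not
      (s := Finset.univ.filter fun p : Fin n × Fin n => ¬ p.1 = p.2 ∧ ¬ P.lt p.1 p.2)
      (p := fun p => P.lt p.2 p.1), Finset.filter_filter, Finset.filter_filter]
    congr 2
    · ext p
      simp only [Finset.mem_filter, Finset.mem_univ, true_and]
      exact ⟨fun h => h.2, fun h => ⟨⟨fun e => hne _ _ h e.symm, fun h' => hasym _ _ h h'⟩, h⟩⟩
    · ext p
      simp only [Finset.mem_filter, Finset.mem_univ, true_and]
      tauto
  have h3 : (Finset.univ.filter fun p : Fin n × Fin n =>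
          ¬ p.1 = p.2 ∧ ¬ P.lt p.1 p.2 ∧ ¬ P.lt p.2 p.1).card
      = (Finset.univ.filter fun p : Fin n × Fin n =>
          p.1 < p.2 ∧ ¬ P.lt p.1 p.2 ∧ ¬ P.lt p.2 p.1).card
      + (Finset.univ.filter fun p : Fin n × Fin n =>
          p.2 < p.1 ∧ ¬ P.lt p.2 p.1 ∧ ¬ P.lt p.1 p.2).card := by
    rw [← Finset.card_filter_add_card_filter_not
      (s := Finset.univ.filter fun p : Fin n × Fin n =>
        ¬ p.1 = p.2 ∧ ¬ P.lt p.1 p.2 ∧ ¬ P.lt p.2 p.1)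
      (p := fun p => p.1 < p.2), Finset.filter_filter, Finset.filter_filter]
    congr 2
    · ext ⟨a, b⟩
      simp only [Finset.mem_filter, Finset.mem_univ, true_and]
      constructor
      · rintro ⟨⟨_, h2, h3⟩, h4⟩; exact ⟨h4, h2, h3⟩
      · rintro ⟨h4, h2, h3⟩
        exact ⟨⟨Fin.ne_of_lt h4, h2, h3⟩, h4⟩
    · ext ⟨a, b⟩
      simp only [Finset.mem_filter, Finset.mem_univ, true_and]
      constructor
      · rintro ⟨⟨h1', h2, h3⟩, h4⟩
        rcases lt_trichotomy a b with h | h | h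
        · exact absurd h h4
        · exact absurd h h1'
        · exact ⟨h, h3, h2⟩
      · rintro ⟨h4, h2, h3⟩
        exact ⟨⟨(Fin.ne_of_lt h4).symm, h3, h2⟩, asymm h4⟩
  have hswap1 : (Finset.univ.filter fun p : Fin n × Fin n => P.lt p.2 p.1).card
      = (Finset.univ.filter fun p : Fin n × Fin n => P.lt p.1 p.2).card :=
    by
    apply Finset.card_bij (fun p _ => p.swap)
    · intro a ha
      simp only [Finset.mem_filter, Finset.mem_univ, true_and] at *
      simpa using ha
    · intro a _ b _ hab
      exact Prod.swap_injective hab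
    · intro b hb
      simp only [Finset.mem_filter, Finset.mem_univ, true_and] at hb
      exact ⟨b.swap, by simpa using hb, by simp⟩
  have hswap2 : (Finset.univ.filter fun p : Fin n × Fin n =>
        p.2 < p.1 ∧ ¬ P.lt p.2 p.1 ∧ ¬ P.lt p.1 p.2).card
      = (Finset.univ.filter fun p : Fin n × Fin n =>
        p.1 < p.2 ∧ ¬ P.lt p.1 p.2 ∧ ¬ P.lt p.2 p.1).card :=
    by
    apply Finset.card_bij (fun p _ => p.swap)
    · intro a ha
      simp only [Finset.mem_filter, Finset.mem_univ, true_and] at *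
      simpa using ha
    · intro a _ b _ hab
      exact Prod.swap_injective hab
    · intro b hb
      simp only [Finset.mem_filter, Finset.mem_univ, true_and] at hb
      exact ⟨b.swap, by simpa using hb, by simp⟩
  omega

/-- block function -/
def qf (k x : ℕ) : ℕ := if x < 2*k then x/2 else x

lemma qf_lt_imp {k a b : ℕ} (h : qf k a < qf k b) : a < b := by
  simp only [qf] at h; split_ifs at h <;> omega

/-- the order: blocks of size two for the first `2k` elements -/
def Pk (n k : ℕ) : PartialOrder (Fin n) where
  le x y := x = y ∨ qf k x.1 < qf k y.1
  lt x y := qf k x.1 < qf k y.1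
  le_refl x := Or.inl rfl
  le_trans x y z hxy hyz := by
    rcases hxy with rfl | h
    · exact hyz
    · rcases hyz with rfl | h'
      · exact Or.inr h
      · exact Or.inr (h.trans h')
  lt_iff_le_not_ge x y := by
    show qf k x.1 < qf k y.1 ↔ _
    constructor
    · intro h
      refine ⟨Or.inr h, ?_⟩
      intro hc
      rcases hc with h' | h'
      · rw [h'] at h; exact Nat.lt_irrefl _ h
      · exact Nat.lt_irrefl _ (h.trans h')
    · rintro ⟨hc, h2⟩
      rcases hc with h' | h'
      · exact absurd (Or.inl h'.symm) h2
      · exact h'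
  le_antisymm x y h1 h2 := by
    rcases h1 with h1 | h1
    · exact h1
    · rcases h2 with h2 | h2
      · exact h2.symm
      · exact absurd h2 (Nat.lt_asymm h1)

lemma Pk_lt (n k : ℕ) (x y : Fin n) : (Pk n k).lt x y ↔ qf k x.1 < qf k y.1 := Iff.rfl

lemma pair_char {n k : ℕ} (x y : Fin n) (hne : x ≠ y) (hq : qf k x.1 = qf k y.1) :
    ∃ i : ℕ, i < k ∧ ((x.1 = 2*i ∧ y.1 = 2*i+1) ∨ (y.1 = 2*i ∧ x.1 = 2*i+1)) := by
  have hxv : x.1 ≠ y.1 := fun e => hne (Fin.ext e)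
  refine ⟨min x.1 y.1 / 2, ?_⟩
  simp only [qf] at hq
  split_ifs at hq <;> omega

lemma card_inc_Pk (n k : ℕ) (hk2 : 2*k ≤ n) :
    Nat.card {p : Fin n × Fin n // p.1 < p.2 ∧ ¬(Pk n k).lt p.1 p.2 ∧ ¬(Pk n k).lt p.2 p.1}
      = k := by
  have key : Function.Bijective (fun i : Fin k =>
      (⟨(⟨2*i.1, by omega⟩, ⟨2*i.1+1, by omega⟩), by
        refine ⟨by simp [Fin.lt_def], ?_, ?_⟩ <;>
          · rw [Pk_lt]; simp only [qf]; split_ifs <;> omega⟩ :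
      {p : Fin n × Fin n // p.1 < p.2 ∧ ¬(Pk n k).lt p.1 p.2 ∧ ¬(Pk n k).lt p.2 p.1})) := by
    constructor
    · intro a b hab
      have := congrArg (fun z => z.1.1.1) hab
      simp only at this
      exact Fin.ext (by omega)
    · rintro ⟨⟨x, y⟩, hp⟩
      obtain ⟨hxy', h1', h2'⟩ := hp
      have hxy : x < y := hxy'
      have h1 : ¬ qf k x.1 < qf k y.1 := fun hc => h1' ((Pk_lt n k x y).mpr hc)
      have h2 : ¬ qf k y.1 < qf k x.1 := fun hc => h2' ((Pk_lt n k y x).mpr hc)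
      have hq : qf k x.1 = qf k y.1 :=
        Nat.le_antisymm (Nat.le_of_not_lt h2) (Nat.le_of_not_lt h1)
      obtain ⟨i, hik, hor⟩ := pair_char x y (Fin.ne_of_lt hxy) hq
      rcases hor with ⟨ex, ey⟩ | ⟨ey, ex⟩
      · refine ⟨⟨i, hik⟩, ?_⟩
        apply Subtype.ext
        simp only
        exact Prod.ext (Fin.ext (by simpa using ex.symm)) (Fin.ext (by simpa using ey.symm))
      · exfalso
        have hv : x.1 < y.1 := hxy
        rw [ex, ey] at hv
        exact Nat.lt_asymm (Nat.lt_succ_self (2*i)) hv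
  rw [← Nat.card_eq_of_bijective _ key]
  simp

def bb (k : ℕ) (b : Fin k → Bool) (i : ℕ) : Bool := if h : i < k then b ⟨i, h⟩ else false

def gswap (k : ℕ) (b : Fin k → Bool) (j : ℕ) : ℕ :=
  if j < 2*k ∧ bb k b (j/2) = true then (if j % 2 = 0 then j+1 else j-1) else j

lemma gswap_pos_even {k : ℕ} {b : Fin k → Bool} {j : ℕ}
    (hc : j < 2*k ∧ bb k b (j/2) = true) (he : j % 2 = 0) : gswap k b j = j + 1 := by
  simp only [gswap]; rw [if_pos hc, if_pos he]

lemma gswap_pos_odd {k : ℕ} {b : Fin k → Bool} {j : ℕ}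
    (hc : j < 2*k ∧ bb k b (j/2) = true) (ho : j % 2 = 1) : gswap k b j = j - 1 := by
  simp only [gswap]; rw [if_pos hc, if_neg (by omega)]

lemma gswap_neg {k : ℕ} {b : Fin k → Bool} {j : ℕ}
    (hc : ¬(j < 2*k ∧ bb k b (j/2) = true)) : gswap k b j = j := by
  simp only [gswap]; rw [if_neg hc]

lemma gswap_lt {n k : ℕ} (hk2 : 2*k ≤ n) (b : Fin k → Bool) {j : ℕ} (hj : j < n) :
    gswap k b j < n := by
  simp only [gswap]; split_ifs <;> omega

lemma gswap_q (k : ℕ) (b : Fin k → Bool) (j : ℕ) : qf k (gswap k b j) = qf k j := by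
  simp only [gswap, qf]; split_ifs <;> omega

lemma gswap_invol (k : ℕ) (b : Fin k → Bool) (j : ℕ) : gswap k b (gswap k b j) = j := by
  by_cases hc : j < 2*k ∧ bb k b (j/2) = true
  · obtain ⟨hjk, hbbj⟩ := hc
    rcases Nat.mod_two_eq_zero_or_one j with he' | ho'
    · have hcc : j+1 < 2*k ∧ bb k b ((j+1)/2) = true :=
        ⟨by omega, by rw [show (j+1)/2 = j/2 by omega]; exact hbbj⟩
      rw [gswap_pos_even ⟨hjk, hbbj⟩ he', gswap_pos_odd hcc (by omega)]
      omega
    · have hcc : j-1 < 2*k ∧ bb k b ((j-1)/2) = true :=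
        ⟨by omega, by rw [show (j-1)/2 = j/2 by omega]; exact hbbj⟩
      rw [gswap_pos_odd ⟨hjk, hbbj⟩ ho', gswap_pos_even hcc (by omega)]
      omega
  · rw [gswap_neg hc, gswap_neg hc]

def Gp (n k : ℕ) (hk2 : 2*k ≤ n) (b : Fin k → Bool) : Equiv.Perm (Fin n) :=
  Function.Involutive.toPerm (fun x => ⟨gswap k b x.1, gswap_lt hk2 b x.2⟩)
    (fun x => Fin.ext (gswap_invol k b x.1))

lemma Gp_val (n k : ℕ) (hk2 : 2*k ≤ n) (b : Fin k → Bool) (x : Fin n) :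
    (Gp n k hk2 b x).1 = gswap k b x.1 := rfl

lemma Gp_ext (n k : ℕ) (hk2 : 2*k ≤ n) (b : Fin k → Bool) :
    ∀ x y : Fin n, (Pk n k).lt x y → Gp n k hk2 b x < Gp n k hk2 b y := by
  intro x y h
  have h' : qf k x.1 < qf k y.1 := h
  have h2 : qf k (gswap k b x.1) < qf k (gswap k b y.1) := by
    rw [gswap_q, gswap_q]; exact h'
  rw [Fin.lt_def, Gp_val, Gp_val]
  exact qf_lt_imp h2

def pt0 (n k : ℕ) (hk2 : 2*k ≤ n) (i : Fin k) : Fin n := ⟨2*i.1, by omega⟩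
def pt1 (n k : ℕ) (hk2 : 2*k ≤ n) (i : Fin k) : Fin n := ⟨2*i.1+1, by omega⟩

lemma linExt_Pk (n k : ℕ) (hk2 : 2*k ≤ n) : linExtCount n (Pk n k) = 2^k := by
  classical
  have hbij : Function.Bijective
      (fun (f : {f : Fin n ≃ Fin n // ∀ x y : Fin n, (Pk n k).lt x y → f x < f y})
        (i : Fin k) => decide (f.1 (pt1 n k hk2 i) < f.1 (pt0 n k hk2 i))) := by
    constructor
    · intro f f' hff
      apply Subtype.ext
      apply equiv_eq_of_rel n f'.1 f.1
      intro x y hxy hlt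
      rcases lt_trichotomy (qf k x.1) (qf k y.1) with hq | hq | hq
      · exact f.2 x y hq
      swap
      · exact absurd (f'.2 y x hq) (asymm hlt)
      · obtain ⟨i, hik, hor⟩ := pair_char x y hxy hq
        have hc := congrFun hff ⟨i, hik⟩
        simp only [decide_eq_decide] at hc
        rcases hor with ⟨ex, ey⟩ | ⟨ey, ex⟩
        · have h0 : pt0 n k hk2 ⟨i, hik⟩ = x := Fin.ext (by simp [pt0, ex])
          have h1 : pt1 n k hk2 ⟨i, hik⟩ = y := Fin.ext (by simp [pt1, ey])
          rw [h0, h1] at hc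
          have hn1 : ¬ (f'.1 y < f'.1 x) := asymm hlt
          have hn2 : ¬ (f.1 y < f.1 x) := fun hh => hn1 (hc.mp hh)
          have hne : (f.1 x).1 ≠ (f.1 y).1 :=
            fun e => hxy (f.1.injective (Fin.val_injective e))
          rw [Fin.lt_def] at hn2 ⊢
          omega
        · have h0 : pt0 n k hk2 ⟨i, hik⟩ = y := Fin.ext (by simp [pt0, ey])
          have h1 : pt1 n k hk2 ⟨i, hik⟩ = x := Fin.ext (by simp [pt1, ex])
          rw [h0, h1] at hc
          exact hc.mpr hlt
    · intro b
      refine ⟨⟨Gp n k hk2 b, Gp_ext n k hk2 b⟩, ?_⟩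
      funext i
      have h20 : (2*i.1)/2 = i.1 := by omega
      have h21 : (2*i.1+1)/2 = i.1 := by omega
      have hbbi : bb k b i.1 = b i := by
        simp only [bb]; rw [dif_pos i.2]
      cases hb : b i with
      | true =>
        have hc0 : 2*i.1 < 2*k ∧ bb k b ((2*i.1)/2) = true :=
          ⟨by omega, by rw [h20, hbbi]; exact hb⟩
        have hc1 : 2*i.1+1 < 2*k ∧ bb k b ((2*i.1+1)/2) = true :=
          ⟨by omega, by rw [h21, hbbi]; exact hb⟩
        have e0 : gswap k b (2*i.1) = 2*i.1+1 := gswap_pos_even hc0 (by omega)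
        have e1 : gswap k b (2*i.1+1) = 2*i.1 := gswap_pos_odd hc1 (by omega)
        simp only
        apply decide_eq_true
        rw [Fin.lt_def, Gp_val, Gp_val]
        show gswap k b (pt1 n k hk2 i).1 < gswap k b (pt0 n k hk2 i).1
        rw [show (pt1 n k hk2 i).1 = 2*i.1+1 from rfl, show (pt0 n k hk2 i).1 = 2*i.1 from rfl,
          e0, e1]
        omega
      | false =>
        have hc0 : ¬(2*i.1 < 2*k ∧ bb k b ((2*i.1)/2) = true) := by
          rw [h20, hbbi, hb]; simp
        have hc1 : ¬(2*i.1+1 < 2*k ∧ bb k b ((2*i.1+1)/2) = true) := by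
          rw [h21, hbbi, hb]; simp
        have e0 : gswap k b (2*i.1) = 2*i.1 := gswap_neg hc0
        have e1 : gswap k b (2*i.1+1) = 2*i.1+1 := gswap_neg hc1
        simp only
        apply decide_eq_false
        rw [Fin.lt_def, Gp_val, Gp_val]
        show ¬ (gswap k b (pt1 n k hk2 i).1 < gswap k b (pt0 n k hk2 i).1)
        rw [show (pt1 n k hk2 i).1 = 2*i.1+1 from rfl, show (pt0 n k hk2 i).1 = 2*i.1 from rfl,
          e0, e1]
        omega
  rw [linExtCount, Nat.card_eq_of_bijective _ hbij, Nat.card_fun]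
  simp

theorem fplus_very_dense (δ : ℝ) (hδ0 : 0 < δ) (hδ1 : δ < 1) (n : ℕ) (hn : 1 ≤ n)
    (hvd : (1 - δ) * ((n : ℝ) * ((n : ℝ) - 1) / 2) ≤ (n : ℝ) / 2) :
    fPlus n δ = 2 ^ ⌊(1 - δ) * ((n : ℝ) * ((n : ℝ) - 1) / 2)⌋₊ ∧
    (∀ P : PartialOrder (Fin n),
        δ * ((n : ℝ) * ((n : ℝ) - 1) / 2) ≤ (compCount n P : ℝ) →
        linExtCount n P ≤ 2 ^ ⌊(1 - δ) * ((n : ℝ) * ((n : ℝ) - 1) / 2)⌋₊) ∧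
    (∃ P : PartialOrder (Fin n),
        δ * ((n : ℝ) * ((n : ℝ) - 1) / 2) ≤ (compCount n P : ℝ) ∧
        linExtCount n P = 2 ^ ⌊(1 - δ) * ((n : ℝ) * ((n : ℝ) - 1) / 2)⌋₊) := by
  classical
  set M : ℝ := (n : ℝ) * ((n : ℝ) - 1) / 2 with hMdef
  set k : ℕ := ⌊(1 - δ) * M⌋₊ with hkdef
  have h1n : (1 : ℝ) ≤ (n : ℝ) := by exact_mod_cast hn
  have hM0 : 0 ≤ M := by rw [hMdef]; nlinarith
  have hkM : (k : ℝ) ≤ (1 - δ) * M :=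
    Nat.floor_le (mul_nonneg (by linarith) hM0)
  have hk2 : 2 * k ≤ n := by
    have h2 : (2 * k : ℝ) ≤ (n : ℝ) := by
      push_cast
      linarith [hkM, hvd]
    exact_mod_cast h2
  -- the counting identity, over ℝ
  have hci : ∀ P : PartialOrder (Fin n),
      (compCount n P : ℝ)
        + (Nat.card {p : Fin n × Fin n //
            p.1 < p.2 ∧ ¬P.lt p.1 p.2 ∧ ¬P.lt p.2 p.1} : ℝ) = M := by
    intro P
    have hcast := congrArg (Nat.cast : ℕ → ℝ) (count_eq n P)
    push_cast at hcast
    rw [hMdef]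
    linear_combination hcast / 2
  -- upper bound for every admissible P
  have hub : ∀ P : PartialOrder (Fin n),
      δ * M ≤ (compCount n P : ℝ) → linExtCount n P ≤ 2 ^ k := by
    intro P hP
    have hinc : Nat.card {p : Fin n × Fin n //
        p.1 < p.2 ∧ ¬P.lt p.1 p.2 ∧ ¬P.lt p.2 p.1} ≤ k := by
      apply Nat.le_floor
      have := hci P
      linarith
    exact le_trans (linExt_le_pow n P) (Nat.pow_le_pow_right (by norm_num) hinc)
  -- the extremal example
  have hexP : δ * M ≤ (compCount n (Pk n k) : ℝ) := by
    have hinc := card_inc_Pk n k hk2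
    have := hci (Pk n k)
    rw [hinc] at this
    linarith
  have hexE : linExtCount n (Pk n k) = 2 ^ k := linExt_Pk n k hk2
  refine ⟨?_, hub, ⟨Pk n k, hexP, hexE⟩⟩
  -- compute the sSup
  have hmem : (2 : ℕ) ^ k ∈ {m : ℕ | ∃ P : PartialOrder (Fin n),
      δ * ((n : ℝ) * ((n : ℝ) - 1) / 2) ≤ (compCount n P : ℝ) ∧ linExtCount n P = m} :=
    ⟨Pk n k, hexP, hexE⟩
  have hubs : ∀ m ∈ {m : ℕ | ∃ P : PartialOrder (Fin n),
      δ * ((n : ℝ) * ((n : ℝ) - 1) / 2) ≤ (compCount n P : ℝ) ∧ linExtCount n P = m},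
      m ≤ 2 ^ k := by
    rintro m ⟨P, h1, rfl⟩
    exact hub P h1
  rw [fPlus]
  exact le_antisymm (csSup_le ⟨2 ^ k, hmem⟩ hubs) (le_csSup ⟨2 ^ k, hubs⟩ hmem)
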